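/- arXiv:1702.01744 — 2 statements merged into one kernel-verified Lean document; each statement's English description precedes it below -/
import Mathlib

section
/- For any nonnegative integer sequence (d₁, …, dₙ) with d₁ + ⋯ + dₙ = n−1, the number of rooted labeled trees on {1,…,n} in which vertex i has exactly dᵢ children for every i equals the multinomial coefficient (n−1)!/(d₁!·d₂!⋯dₙ!). -/
/-!
Fix a vertex `v₀` with `d v₀ = 0`; it exists because the `d i` sum to less than `#V`, and it is a
leaf of every tree counted. Sorting these trees by the parent `i` of `v₀` and deleting `v₀` gives a
bijection with the trees on `V \ {v₀}` in which `i` has one child fewer. So the number of trees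
satisfies the recurrence `M(d) = ∑_{d i ≠ 0} M(d - eᵢ)` of the multinomial coefficients, and the
two agree on a single vertex.
-/

/-- `p` is the parent function of a rooted tree on `Fin m` with (arbitrary) root `r`:
the unique fixed point of `p` is `r`, and every vertex eventually reaches it. -/
def IsTreeRootedAt (m : ℕ) (p : Fin m → Fin m) (r : Fin m) : Prop :=
  (∀ v, p v = v ↔ v = r) ∧ ∀ v, ∃ l, (p^[l]) v = r

open Finset Function Nat

theorem Set.EqOn.iterate {α : Type*} {f g : α → α} {s : Set α} (h : Set.EqOn f g s)
    (hg : Set.MapsTo g s s) : ∀ n, Set.EqOn f^[n] g^[n] s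
  | 0 => fun _ _ => rfl
  | n + 1 => fun x hx => by
    rw [iterate_succ_apply, iterate_succ_apply, h hx, Set.EqOn.iterate h hg n (hg hx)]

theorem Nat.card_eq_sum_card_fiber {ι κ : Type*} [Finite ι] [DecidableEq κ] {f : ι → κ}
    {t : Finset κ} (hf : ∀ a, f a ∈ t) : Nat.card ι = ∑ b ∈ t, Nat.card {a // f a = b} := by
  have := Fintype.ofFinite ι
  simp_rw [Nat.card_eq_fintype_card, Fintype.card_subtype]
  exact card_eq_sum_card_fiberwise fun a _ => hf a

theorem Finset.sum_update_sub_one {α : Type*} [DecidableEq α] {s : Finset α} {f : α → ℕ} {i : α}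
    (hi : i ∈ s) (hfi : f i ≠ 0) :
    ∑ j ∈ s, update f i (f i - 1) j = ∑ j ∈ s, f j - 1 := by
  have := add_sum_erase s f hi
  rw [sum_update_of_mem hi, ← erase_eq]
  omega

namespace Nat

variable {α : Type*} [DecidableEq α] {s : Finset α} {f : α → ℕ}

theorem prod_factorial_mul_multinomial_update_pred {i : α} (hi : i ∈ s) (hfi : f i ≠ 0) :
    (∏ j ∈ s, (f j)!) * multinomial s (update f i (f i - 1)) = f i * (∑ j ∈ s, f j - 1)! := by
  have hprod : ∏ j ∈ s, (f j)! = f i * ∏ j ∈ s, (update f i (f i - 1) j)! := by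
    rw [← mul_prod_erase s _ hi, ← mul_prod_erase s (fun j => (update f i (f i - 1) j)!) hi,
      update_self, ← mul_assoc, mul_factorial_pred hfi]
    congr 1
    exact prod_congr rfl fun j hj => by rw [update_of_ne (ne_of_mem_erase hj)]
  rw [hprod, mul_assoc, multinomial_spec, sum_update_sub_one hi hfi]

theorem multinomial_eq_sum_multinomial_update_pred (hs : ∑ i ∈ s, f i ≠ 0) :
    multinomial s f = ∑ i ∈ s with f i ≠ 0, multinomial s (update f i (f i - 1)) := by
  refine Nat.eq_of_mul_eq_mul_left (prod_pos fun j (_ : j ∈ s) => factorial_pos (f j)) ?_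
  rw [multinomial_spec, mul_sum, sum_congr rfl fun i hi =>
      prod_factorial_mul_multinomial_update_pred (mem_filter.1 hi).1 (mem_filter.1 hi).2,
    ← sum_mul, sum_filter_ne_zero, mul_factorial_pred hs]

end Nat

variable {α : Type*}

/-- Vertices outside `V` are required to be fixed by `p`, so that each tree on `V` has exactly one
encoding. -/
structure IsRootedTreeOn (V : Finset α) (p : α → α) (r : α) : Prop where
  root_mem : r ∈ V
  eq_self_of_notMem : ∀ v ∉ V, p v = v
  mapsTo : Set.MapsTo p V V
  eq_self_iff : ∀ v ∈ V, p v = v ↔ v = r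
  exists_iterate_eq_root : ∀ v ∈ V, ∃ l, p^[l] v = r

theorem isRootedTreeOn_singleton_iff {x : α} {p : α → α} {r : α} :
    IsRootedTreeOn {x} p r ↔ p = id ∧ r = x := by
  constructor
  · intro h
    refine ⟨funext fun v => ?_, mem_singleton.1 h.root_mem⟩
    rcases eq_or_ne v x with rfl | hvx
    · exact mem_singleton.1 (h.mapsTo (mem_singleton_self v))
    · exact h.eq_self_of_notMem v (by simpa using hvx)
  · rintro ⟨rfl, rfl⟩
    exact ⟨mem_singleton_self r, fun _ _ => rfl, Set.mapsTo_id _,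
      fun v hv => by simp [mem_singleton.1 hv], fun v hv => ⟨0, mem_singleton.1 hv⟩⟩

theorem isRootedTreeOn_univ_iff [Fintype α] {p : α → α} {r : α} :
    IsRootedTreeOn univ p r ↔ (∀ v, p v = v ↔ v = r) ∧ ∀ v, ∃ l, p^[l] v = r :=
  ⟨fun h => ⟨fun v => h.eq_self_iff v (mem_univ v),
      fun v => h.exists_iterate_eq_root v (mem_univ v)⟩,
    fun ⟨hfix, hreach⟩ => ⟨mem_univ r, fun v hv => absurd (mem_univ v) hv,
      fun v _ => mem_coe.2 (mem_univ (p v)), fun v _ => hfix v, fun v _ => hreach v⟩⟩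

variable [DecidableEq α]

def children (V : Finset α) (p : α → α) (i : α) : Finset α := {v ∈ V | p v = i ∧ v ≠ i}

theorem card_children_insert_update {W : Finset α} {p : α → α} {v₀ i j : α} (hv₀ : v₀ ∉ W)
    (hj : j ≠ v₀) :
    #(children (insert v₀ W) (update p v₀ i) j) = #(children W p j) + if i = j then 1 else 0 := by
  have hW : {v ∈ W | update p v₀ i v = j ∧ v ≠ j} = children W p j :=
    filter_congr fun v hv => by rw [update_of_ne (ne_of_mem_of_not_mem hv hv₀)]
  rw [children, filter_insert, update_self, hW]
  by_cases hij : i = j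
  · rw [if_pos ⟨hij, hj.symm⟩, if_pos hij,
      card_insert_of_notMem (s := children W p j) fun h => hv₀ (mem_filter.1 h).1]
  · rw [if_neg fun h => hij h.1, if_neg hij, add_zero]

theorem card_children_pos {V : Finset α} {p : α → α} {v i : α} (hv : v ∈ V) (hvi : v ≠ i)
    (hpv : p v = i) : 0 < #(children V p i) :=
  card_pos.2 ⟨v, mem_filter.2 ⟨hv, hpv, hvi⟩⟩

namespace IsRootedTreeOn

variable {V W : Finset α} {p q : α → α} {r v₀ i : α}

theorem exists_child_root (h : IsRootedTreeOn V p r) (hV : V.Nontrivial) :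
    ∃ u ∈ V, u ≠ r ∧ p u = r := by
  obtain ⟨u, hu, hur⟩ := hV.exists_ne r
  have hreach : ∃ l, p^[l] u = r := h.exists_iterate_eq_root u hu
  have hl : Nat.find hreach ≠ 0 := fun h0 => hur (by simpa [h0] using Nat.find_spec hreach)
  refine ⟨p^[Nat.find hreach - 1] u, h.mapsTo.iterate _ hu, Nat.find_min hreach (by omega), ?_⟩
  rw [← iterate_succ_apply' p, Nat.succ_eq_add_one, Nat.sub_one_add_one hl]
  exact Nat.find_spec hreach

theorem parent_mem_of_leaf (h : IsRootedTreeOn (insert v₀ W) p r) (hv₀ : v₀ ∉ W)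
    (hW : W.Nonempty) (hleaf : ∀ v ∈ W, p v ≠ v₀) : p v₀ ∈ W := by
  have hr : v₀ ≠ r := by
    rintro rfl
    obtain ⟨w, hw⟩ := hW
    obtain ⟨u, hu, huv₀, hpu⟩ := h.exists_child_root
      ⟨v₀, mem_insert_self v₀ W, w, mem_insert_of_mem hw, (ne_of_mem_of_not_mem hw hv₀).symm⟩
    exact hleaf u ((mem_insert.1 hu).resolve_left huv₀) hpu
  exact (mem_insert.1 (h.mapsTo (mem_insert_self v₀ W))).resolve_left
    (mt (h.eq_self_iff v₀ (mem_insert_self v₀ W)).1 hr)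

theorem erase_leaf (h : IsRootedTreeOn (insert v₀ W) p r) (hv₀ : v₀ ∉ W)
    (hleaf : ∀ v ∈ W, p v ≠ v₀) (hpv₀ : p v₀ ∈ W) : IsRootedTreeOn W (update p v₀ v₀) r := by
  have hWp : Set.MapsTo p W W := fun v hv =>
    (mem_insert.1 (h.mapsTo (mem_insert_of_mem hv))).resolve_left (hleaf v hv)
  have hagree : Set.EqOn (update p v₀ v₀) p W := fun v hv =>
    update_of_ne (ne_of_mem_of_not_mem hv hv₀) _ _
  have hr : r ≠ v₀ := by
    rintro rfl
    exact hv₀ (((h.eq_self_iff r (mem_insert_self r W)).2 rfl) ▸ hpv₀)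
  refine ⟨(mem_insert.1 h.root_mem).resolve_left hr, fun v hv => ?_, fun v hv => ?_,
    fun v hv => ?_, fun v hv => ?_⟩
  · rcases eq_or_ne v v₀ with rfl | hvv₀
    · exact update_self _ _ _
    · rw [update_of_ne hvv₀]
      exact h.eq_self_of_notMem v (by simp [hv, hvv₀])
  · rw [hagree hv]; exact hWp hv
  · rw [hagree hv]; exact h.eq_self_iff v (mem_insert_of_mem hv)
  · obtain ⟨l, hl⟩ := h.exists_iterate_eq_root v (mem_insert_of_mem hv)
    exact ⟨l, (hagree.iterate hWp l hv).trans hl⟩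

theorem insert_leaf (h : IsRootedTreeOn W q r) (hv₀ : v₀ ∉ W) (hi : i ∈ W) :
    IsRootedTreeOn (insert v₀ W) (update q v₀ i) r := by
  have hagree : Set.EqOn (update q v₀ i) q W := fun v hv =>
    update_of_ne (ne_of_mem_of_not_mem hv hv₀) _ _
  have hr : r ≠ v₀ := ne_of_mem_of_not_mem h.root_mem hv₀
  refine ⟨mem_insert_of_mem h.root_mem, fun v hv => ?_, fun v hv => ?_, fun v hv => ?_,
    fun v hv => ?_⟩
  · rw [mem_insert, not_or] at hv
    rw [update_of_ne hv.1]
    exact h.eq_self_of_notMem v hv.2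
  · rcases mem_insert.1 hv with rfl | hv
    · rw [update_self]; exact mem_insert_of_mem hi
    · rw [hagree hv]; exact mem_insert_of_mem (h.mapsTo hv)
  · rcases mem_insert.1 hv with rfl | hv
    · rw [update_self]
      exact iff_of_false (ne_of_mem_of_not_mem hi hv₀) hr.symm
    · rw [hagree hv]; exact h.eq_self_iff v hv
  · rcases mem_insert.1 hv with rfl | hv
    · obtain ⟨l, hl⟩ := h.exists_iterate_eq_root i hi
      exact ⟨l + 1, by rw [iterate_succ_apply, update_self, hagree.iterate h.mapsTo l hi, hl]⟩
    · obtain ⟨l, hl⟩ := h.exists_iterate_eq_root v hv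
      exact ⟨l, (hagree.iterate h.mapsTo l hv).trans hl⟩

end IsRootedTreeOn

abbrev RootedTreesWithChildCounts (V : Finset α) (d : α → ℕ) : Type _ :=
  {pr : (α → α) × α // IsRootedTreeOn V pr.1 pr.2 ∧ ∀ i ∈ V, #(children V pr.1 i) = d i}

namespace RootedTreesWithChildCounts

variable {V W : Finset α} {d : α → ℕ} {v₀ i : α}

theorem card_singleton (x : α) (hd : d x = 0) :
    Nat.card (RootedTreesWithChildCounts {x} d) = 1 := by
  refine Nat.card_eq_one_iff_exists.2
    ⟨⟨(id, x), isRootedTreeOn_singleton_iff.2 ⟨rfl, rfl⟩, by simp [children, hd]⟩, fun T => ?_⟩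
  obtain ⟨hp, hr⟩ := isRootedTreeOn_singleton_iff.1 T.2.1
  exact Subtype.ext (Prod.ext hp hr)

theorem parent_ne_of_eq_zero (T : RootedTreesWithChildCounts V d) (hd₀ : d v₀ = 0)
    (hv₀ : v₀ ∈ V) {v : α} (hv : v ∈ V) (hvv₀ : v ≠ v₀) : T.1.1 v ≠ v₀ := fun hpv =>
  (card_children_pos hv hvv₀ hpv).ne' ((T.2.2 v₀ hv₀).trans hd₀)

theorem parent_mem (T : RootedTreesWithChildCounts (insert v₀ W) d) (hv₀ : v₀ ∉ W)
    (hW : W.Nonempty) (hd₀ : d v₀ = 0) : T.1.1 v₀ ∈ W :=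
  T.2.1.parent_mem_of_leaf hv₀ hW fun _ hv =>
    T.parent_ne_of_eq_zero hd₀ (mem_insert_self v₀ W) (mem_insert_of_mem hv)
      (ne_of_mem_of_not_mem hv hv₀)

def eraseLeafEquiv (hv₀ : v₀ ∉ W) (hi : i ∈ W) (hd₀ : d v₀ = 0) (hdi : d i ≠ 0) :
    {T : RootedTreesWithChildCounts (insert v₀ W) d // T.1.1 v₀ = i} ≃
      RootedTreesWithChildCounts W (update d i (d i - 1)) where
  toFun T := by
    refine ⟨(update T.1.1.1 v₀ v₀, T.1.1.2),
      T.1.2.1.erase_leaf hv₀ (fun v hv => ?_) (by rw [T.2]; exact hi), fun j hj => ?_⟩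
    · exact T.1.parent_ne_of_eq_zero hd₀ (mem_insert_self v₀ W) (mem_insert_of_mem hv)
        (ne_of_mem_of_not_mem hv hv₀)
    · dsimp only
      have h := card_children_insert_update (p := update T.1.1.1 v₀ v₀) (i := i) hv₀
        (ne_of_mem_of_not_mem hj hv₀)
      rw [update_idem, update_eq_self_iff.2 T.2.symm, T.1.2.2 j (mem_insert_of_mem hj)] at h
      rcases eq_or_ne j i with rfl | hji
      · rw [if_pos rfl] at h
        rw [update_self]
        omega
      · rw [if_neg (Ne.symm hji)] at h
        rw [update_of_ne hji]
        omega
  invFun S := by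
    refine ⟨⟨(update S.1.1 v₀ i, S.1.2), S.2.1.insert_leaf hv₀ hi, fun j hj => ?_⟩,
      update_self _ _ _⟩
    dsimp only
    rcases eq_or_ne j v₀ with rfl | hj₀
    · rw [hd₀, Finset.card_eq_zero, children, filter_eq_empty_iff]
      rintro v hv ⟨hpv, hvj⟩
      rw [update_of_ne hvj] at hpv
      exact hv₀ (hpv ▸ S.2.1.mapsTo ((mem_insert.1 hv).resolve_left hvj))
    · rw [card_children_insert_update hv₀ hj₀, S.2.2 j ((mem_insert.1 hj).resolve_left hj₀)]
      rcases eq_or_ne j i with rfl | hji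
      · rw [update_self, if_pos rfl]; omega
      · rw [update_of_ne hji, if_neg (Ne.symm hji), add_zero]
  left_inv T := by
    ext1; ext1
    exact Prod.ext ((update_idem _ _ _).trans (update_eq_self_iff.2 T.2.symm)) rfl
  right_inv S := by
    ext1
    exact Prod.ext
      ((update_idem _ _ _).trans (update_eq_self_iff.2 (S.2.1.eq_self_of_notMem v₀ hv₀).symm)) rfl

theorem card_insert_leaf [Finite α] (hv₀ : v₀ ∉ W) (hW : W.Nonempty) (hd₀ : d v₀ = 0)
    (hd : ∑ i ∈ W, d i = #W)
    (ih : ∀ i ∈ W, d i ≠ 0 → Nat.card (RootedTreesWithChildCounts W (update d i (d i - 1))) =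
      multinomial W (update d i (d i - 1))) :
    Nat.card (RootedTreesWithChildCounts (insert v₀ W) d) = multinomial (insert v₀ W) d := by
  calc Nat.card (RootedTreesWithChildCounts (insert v₀ W) d)
      = ∑ i ∈ W, Nat.card {T : RootedTreesWithChildCounts (insert v₀ W) d // T.1.1 v₀ = i} :=
        Nat.card_eq_sum_card_fiber fun T => T.parent_mem hv₀ hW hd₀
    _ = ∑ i ∈ W with d i ≠ 0, multinomial W (update d i (d i - 1)) := by
        rw [sum_filter]
        refine sum_congr rfl fun i hi => ?_
        split_ifs with hdi
        · rw [Nat.card_congr (eraseLeafEquiv hv₀ hi hd₀ hdi), ih i hi hdi]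
        · refine Nat.card_eq_zero.2 (.inl ⟨fun T => ?_⟩)
          exact T.1.parent_ne_of_eq_zero (not_not.1 hdi) (mem_insert_of_mem hi)
            (mem_insert_self v₀ W) (ne_of_mem_of_not_mem hi hv₀).symm T.2
    _ = multinomial W d :=
        (multinomial_eq_sum_multinomial_update_pred (hd ▸ hW.card_pos.ne')).symm
    _ = multinomial (insert v₀ W) d := by simp [multinomial_insert hv₀, hd₀]

end RootedTreesWithChildCounts

open RootedTreesWithChildCounts in
theorem card_rootedTreesWithChildCounts [Finite α] {V : Finset α} (hV : V.Nonempty) {d : α → ℕ}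
    (hd : ∑ i ∈ V, d i = #V - 1) :
    Nat.card (RootedTreesWithChildCounts V d) = multinomial V d := by
  induction V using Finset.strongInduction generalizing d with
  | H V ih =>
  obtain ⟨x, rfl⟩ | hV₂ := hV.exists_eq_singleton_or_nontrivial
  · rw [multinomial_singleton]
    exact card_singleton x (by simpa using hd)
  obtain ⟨v₀, hv₀, hd₀⟩ : ∃ v₀ ∈ V, d v₀ = 0 := by
    have hlt : ∑ i ∈ V, d i < ∑ _i ∈ V, 1 := by
      rw [← card_eq_sum_ones, hd]
      exact Nat.sub_lt hV.card_pos one_pos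
    obtain ⟨v₀, hv₀, h⟩ := exists_lt_of_sum_lt hlt
    exact ⟨v₀, hv₀, Nat.lt_one_iff.1 h⟩
  have hW : (V.erase v₀).Nonempty := hV₂.erase_nonempty
  have hdW : ∑ i ∈ V.erase v₀, d i = #(V.erase v₀) := by
    have := add_sum_erase V d hv₀
    have := card_erase_of_mem hv₀
    have := hV.card_pos
    omega
  rw [← insert_erase hv₀]
  refine card_insert_leaf (notMem_erase v₀ V) hW hd₀ hdW fun i hi hdi => ?_
  exact ih _ (erase_ssubset hv₀) hW (by rw [sum_update_sub_one hi hdi, hdW])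

theorem ncard_setOf_eq_card_children [Fintype α] (p : α → α) (i : α) :
    {v | p v = i ∧ v ≠ i}.ncard = #(children univ p i) := by
  rw [children, ← Set.ncard_coe_finset, coe_filter]
  simp

theorem card_rooted_trees_degree_sequence (n : ℕ) (hn : 1 ≤ n) (d : Fin n → ℕ)
    (hd : ∑ i, d i = n - 1) :
    Nat.card {pr : (Fin n → Fin n) × Fin n //
        IsTreeRootedAt n pr.1 pr.2 ∧
        ∀ i : Fin n, {v : Fin n | pr.1 v = i ∧ v ≠ i}.ncard = d i} =
      Nat.multinomial Finset.univ d := by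
  rw [← card_rootedTreesWithChildCounts (univ_nonempty_iff.2 ⟨⟨0, hn⟩⟩) (by simpa using hd)]
  refine Nat.card_congr (Equiv.subtypeEquivRight fun pr => ?_)
  simp only [IsTreeRootedAt, isRootedTreeOn_univ_iff, ncard_setOf_eq_card_children, mem_univ,
    forall_const]
end

section
/- Let n₁ + 2n₂ + ⋯ + m·n_m = n−1 and n₀ = n − (n₁ + ⋯ + n_m). Then the number of unlabeled plane trees on n vertices having exactly nᵢ vertices of degree i for each 0 ≤ i ≤ m equals (1/n) · n!/(n₀!·n₁!⋯n_m!). -/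
/-- A (finite, unlabeled) plane tree: a root together with a linearly ordered
list of subtrees. -/
inductive PlaneTree : Type
  | node : List PlaneTree → PlaneTree

/-- The number of vertices of a plane tree. -/
def PlaneTree.size : PlaneTree → ℕ
  | .node ts => 1 + (ts.attach.map fun t => PlaneTree.size t.1).sum
decreasing_by have := List.sizeOf_lt_of_mem t.2; simp at this ⊢; omega

/-- The number of vertices of a plane tree having exactly `i` children. -/
def PlaneTree.degCount (i : ℕ) : PlaneTree → ℕ
  | .node ts => (if ts.length = i then 1 else 0) +
      (ts.attach.map fun t => PlaneTree.degCount i t.1).sum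
decreasing_by have := List.sizeOf_lt_of_mem t.2; simp at this ⊢; omega

/-!
Reading the degrees of a plane tree in preorder (its Łukasiewicz code) is a bijection onto the
words whose walk with steps `x - 1`, started at `0`, first reaches `-1` at the last letter.
The code of a tree with degree counts `nᵢ` is an arrangement of the multiset with `nᵢ` copies
of `i`; there are `n! / ∏ nᵢ!` arrangements, and since the letters sum to `n - 1`, the cycle
lemma says that exactly one rotation of each arrangement is a code. Hence the arrangements are
the `n` rotations of the codes, each counted once.
-/

/-- The Łukasiewicz walk of `w` started at height `c`, with step `x - 1` for each letter `x`,
stays positive before the end of `w` and ends at `0`; the words with this property are the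
preorder degree sequences of the forests of `c` plane trees. -/
def IsForestCode (c : ℕ) (w : List ℕ) : Prop :=
  w.sum + c = w.length ∧ ∀ k < w.length, k < (w.take k).sum + c

theorem isForestCode_zero_iff {w : List ℕ} : IsForestCode 0 w ↔ w = [] := by
  refine ⟨fun h => ?_, fun h => by simp [h, IsForestCode]⟩
  by_contra hw
  simpa using h.2 0 (List.length_pos_iff.mpr hw)

theorem isForestCode_succ_cons_iff {c x : ℕ} {v : List ℕ} :
    IsForestCode (c + 1) (x :: v) ↔ IsForestCode (c + x) v := by
  simp only [IsForestCode, List.sum_cons, List.length_cons]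
  refine and_congr (by omega) ⟨fun h k hk => ?_, fun h k hk => ?_⟩
  · have := h (k + 1) (by omega)
    simp only [List.take_succ_cons, List.sum_cons] at this
    omega
  · cases k with
    | zero => simp
    | succ k =>
      have := h k (by omega)
      simp only [List.take_succ_cons, List.sum_cons]
      omega

theorem IsForestCode.ne_nil {c : ℕ} {w : List ℕ} (h : IsForestCode (c + 1) w) : w ≠ [] := by
  rintro rfl
  simpa [IsForestCode] using h.1

theorem IsForestCode.append {c d : ℕ} {v w : List ℕ} (hv : IsForestCode c v)
    (hw : IsForestCode d w) : IsForestCode (c + d) (v ++ w) := by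
  have := hv.1
  have := hw.1
  refine ⟨by simp only [List.sum_append, List.length_append]; omega, fun k hk => ?_⟩
  rw [List.take_append, List.sum_append]
  rcases lt_or_ge k v.length with hkv | hkv
  · simpa [Nat.sub_eq_zero_of_le hkv.le] using (hv.2 k hkv).trans_le (by omega)
  · rw [List.take_of_length_le hkv]
    have := hw.2 (k - v.length) (by simp at hk; omega)
    omega

theorem isForestCode_flatten {ws : List (List ℕ)} (h : ∀ w ∈ ws, IsForestCode 1 w) :
    IsForestCode ws.length ws.flatten := by
  induction ws with
  | nil => exact isForestCode_zero_iff.mpr rfl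
  | cons w ws ih =>
    simpa [Nat.add_comm] using
      (h w (by simp)).append (ih fun u hu => h u (List.mem_cons_of_mem w hu))

/-- The first tree of a forest ends where the walk first drops below its starting height. -/
theorem IsForestCode.exists_eq_append {c : ℕ} {v : List ℕ} (h : IsForestCode (c + 1) v) :
    ∃ x y, v = x ++ y ∧ IsForestCode 1 x ∧ IsForestCode c y := by
  have hv := h.1
  have hex : ∃ t, (v.take t).sum < t := ⟨v.length, by simp; omega⟩
  obtain ⟨t, hlt, hbefore⟩ : ∃ t, (v.take t).sum < t ∧ ∀ k < t, k ≤ (v.take k).sum :=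
    ⟨Nat.find hex, Nat.find_spec hex, fun k hk => not_lt.mp (Nat.find_min hex hk)⟩
  have ht : t ≤ v.length := by
    by_contra! ht
    have := hbefore v.length ht
    simp at this
    omega
  have hpos : 0 < t := Nat.pos_of_ne_zero fun h0 => by simp [h0] at hlt
  have hsum : (v.take t).sum + 1 = t := by
    have := hbefore (t - 1) (by omega)
    have : (v.take (t - 1)).sum ≤ (v.take t).sum := List.monotone_sum_take v (Nat.sub_le t 1)
    omega
  have hsplit : (v.take t).sum + (v.drop t).sum = v.sum := by
    rw [← List.sum_append, List.take_append_drop]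
  refine ⟨v.take t, v.drop t, (List.take_append_drop t v).symm, ⟨?_, fun k hk => ?_⟩,
    ⟨?_, fun k hk => ?_⟩⟩
  · simp [ht, hsum]
  · rw [List.take_take, min_eq_left (by simp at hk; omega)]
    have := hbefore k (by simp at hk; omega)
    omega
  · simp only [List.length_drop]
    omega
  · have := h.2 (t + k) (by simp at hk; omega)
    rw [List.take_add, List.sum_append] at this
    omega

theorem IsForestCode.eq_of_prefix {u u' : List ℕ} (hu : IsForestCode 1 u)
    (hu' : IsForestCode 1 u') (h : u <+: u') : u = u' := by
  obtain ⟨z, rfl⟩ := h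
  rcases eq_or_ne z [] with rfl | hz
  · simp
  · have := hu.1
    have := hu'.2 u.length (by simpa using List.length_pos_iff.mpr hz)
    simp at this
    omega

theorem eq_of_flatten_eq_of_isForestCode {ws ws' : List (List ℕ)}
    (h : ∀ w ∈ ws, IsForestCode 1 w) (h' : ∀ w ∈ ws', IsForestCode 1 w)
    (heq : ws.flatten = ws'.flatten) : ws = ws' := by
  induction ws generalizing ws' with
  | nil =>
    cases ws' with
    | nil => rfl
    | cons w' ws' => simp [(h' w' (by simp)).ne_nil] at heq
  | cons w ws ih =>
    cases ws' with
    | nil => simp [(h w (by simp)).ne_nil] at heq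
    | cons w' ws' =>
      simp only [List.flatten_cons] at heq
      have hw := h w (by simp)
      have hw' := h' w' (by simp)
      have hww' : w = w' :=
        (List.prefix_or_prefix_of_prefix (heq ▸ List.prefix_append w _)
          (List.prefix_append w' _)).elim (hw.eq_of_prefix hw')
          fun hp => (hw'.eq_of_prefix hw hp).symm
      subst hww'
      rw [ih (fun u hu => h u (by simp [hu])) (fun u hu => h' u (by simp [hu]))
        (List.append_cancel_left heq)]

theorem List.sum_take_rotate_add {w : List ℕ} {j k : ℕ} (hj : j ≤ w.length)
    (hk : k ≤ w.length) :
    ((w.rotate j).take k).sum + (w.take j).sum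
      = (w.take (j + k)).sum + (w.take (j + k - w.length)).sum := by
  have hsplit : (w.take j).sum + (w.drop j).sum = w.sum := by
    rw [← List.sum_append, List.take_append_drop]
  rw [List.rotate_eq_drop_append_take hj, List.take_append, List.sum_append, List.take_take,
    List.length_drop]
  rcases le_or_gt (j + k) w.length with hjk | hjk
  · rw [Nat.sub_eq_zero_of_le (by omega), Nat.sub_eq_zero_of_le hjk, List.take_add]
    simp only [Nat.zero_min, List.take_zero, List.sum_nil, List.sum_append]
    omega
  · rw [List.take_of_length_le (by simp; omega),
      List.take_of_length_le (by omega : w.length ≤ j + k),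
      min_eq_left (by omega : k - (w.length - j) ≤ j),
      (by omega : k - (w.length - j) = j + k - w.length)]
    omega

theorem IsForestCode.eq_zero_of_rotate {w : List ℕ} (hw : IsForestCode 1 w) {j : ℕ}
    (hj : j < w.length) (hr : IsForestCode 1 (w.rotate j)) : j = 0 := by
  by_contra hj0
  have hrot := List.sum_take_rotate_add hj.le (Nat.sub_le w.length j)
  have := hr.2 (w.length - j) (by simp; omega)
  have := hw.2 j hj
  have := hw.1
  rw [Nat.add_sub_cancel' hj.le, Nat.sub_self, List.take_length] at hrot
  simp only [List.take_zero, List.sum_nil] at hrot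
  omega

/-- **Cycle lemma.** The rotation to use starts right after the first minimum of the walk. -/
theorem exists_isForestCode_rotate {w : List ℕ} (hw : w.sum + 1 = w.length) :
    ∃ j < w.length, IsForestCode 1 (w.rotate j) := by
  let height : ℕ → ℕ := fun k => (w.take k).sum + (w.length - k)
  have hex : ∃ j, j ≤ w.length ∧ ∀ i ≤ w.length, height j ≤ height i := by
    obtain ⟨j, hj, hmin⟩ := Finset.exists_min_image (Finset.range (w.length + 1)) height
      ⟨0, by simp⟩
    exact ⟨j, by simpa [Nat.lt_succ_iff] using hj, fun i hi => hmin i (by simp; omega)⟩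
  obtain ⟨j, ⟨hjn, hmin⟩, hfirst⟩ :
      ∃ j, (j ≤ w.length ∧ ∀ i ≤ w.length, height j ≤ height i) ∧
        ∀ i < j, ¬(i ≤ w.length ∧ ∀ i' ≤ w.length, height i ≤ height i') :=
    ⟨Nat.find hex, Nat.find_spec hex, fun i hi => Nat.find_min hex hi⟩
  have hstrict : ∀ i < j, height j < height i := by
    intro i hi
    obtain ⟨i', hi', hlt⟩ := not_forall₂.mp (not_and.mp (hfirst i hi) (by omega))
    exact (hmin i' hi').trans_lt (not_le.mp hlt)
  have hj0 : j ≠ 0 := by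
    rintro rfl
    have := hmin w.length le_rfl
    simp [height] at this
    omega
  refine ⟨j % w.length, Nat.mod_lt _ (by omega), ?_⟩
  rw [List.rotate_mod]
  refine ⟨by rw [(w.rotate_perm j).sum_eq, List.length_rotate, hw], fun k hk => ?_⟩
  rw [List.length_rotate] at hk
  have hrot := List.sum_take_rotate_add hjn hk.le
  rcases le_or_gt (j + k) w.length with hjk | hjk
  · have := hmin (j + k) hjk
    simp only [height] at this
    rw [Nat.sub_eq_zero_of_le hjk] at hrot
    simp only [List.take_zero, List.sum_nil] at hrot
    omega
  · have := hstrict (j + k - w.length) (by omega)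
    have hall : (w.take (j + k)).sum = w.sum := by rw [List.take_of_length_le (by omega)]
    simp only [height] at this
    omega

theorem eq_of_isForestCode_rotate {l : List ℕ} {j j' : ℕ} (hj : j < l.length)
    (hj' : j' < l.length) (h : IsForestCode 1 (l.rotate j))
    (h' : IsForestCode 1 (l.rotate j')) : j = j' := by
  wlog hle : j ≤ j' generalizing j j'
  · exact (this hj' hj h' h (by omega)).symm
  have := h.eq_zero_of_rotate (j := j' - j) (by simp; omega)
    (by rwa [List.rotate_rotate, Nat.add_sub_cancel' hle])
  omega

theorem List.rotate_rotate_length_sub {α : Type*} {w : List α} {j : ℕ} (hj : j ≤ w.length) :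
    (w.rotate (w.length - j)).rotate j = w := by
  rw [List.rotate_rotate, Nat.sub_add_cancel hj, List.rotate_length]

theorem natCard_coe_eq_card_mul_natCard_isForestCode (s : Multiset ℕ)
    (hs : s.sum + 1 = Multiset.card s) :
    Nat.card {l : List ℕ // (l : Multiset ℕ) = s}
      = Multiset.card s *
          Nat.card {w : List ℕ // (w : Multiset ℕ) = s ∧ IsForestCode 1 w} := by
  have hlen : ∀ l : List ℕ, (l : Multiset ℕ) = s → l.length = Multiset.card s := fun l hl =>
    hl ▸ (Multiset.coe_card l).symm
  rw [← Nat.card_fin (Multiset.card s), ← Nat.card_prod]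
  refine (Nat.card_eq_of_bijective
    (fun p => ⟨p.2.1.rotate (Multiset.card s - p.1),
      (Multiset.coe_eq_coe.mpr (List.rotate_perm _ _)).trans p.2.2.1⟩) ⟨?_, ?_⟩).symm
  · rintro ⟨j, w, hw, hwc⟩ ⟨j', w', hw', hwc'⟩ h
    have hrot : w.rotate (w.length - j) = w'.rotate (w'.length - j') := by
      simpa [hlen w hw, hlen w' hw'] using congrArg Subtype.val h
    have hj : (j : ℕ) ≤ w.length := (hlen w hw).symm ▸ j.2.le
    have hj' : (j' : ℕ) ≤ w'.length := (hlen w' hw').symm ▸ j'.2.le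
    have hjj' : (j : ℕ) = j' := eq_of_isForestCode_rotate
      (l := w.rotate (w.length - j)) (by simp [hlen w hw]) (by simp [hlen w hw])
      (by rwa [List.rotate_rotate_length_sub hj])
      (by rwa [hrot, List.rotate_rotate_length_sub hj'])
    have hww' : w = w' := by
      rw [← List.rotate_rotate_length_sub hj, hrot, hjj', List.rotate_rotate_length_sub hj']
    subst hww'
    simp [Fin.ext hjj']
  · rintro ⟨l, hl⟩
    obtain ⟨j, hj, hcode⟩ := exists_isForestCode_rotate (w := l)
      (by rw [← Multiset.sum_coe, hl, hs, hlen l hl])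
    refine ⟨⟨⟨j, hlen l hl ▸ hj⟩, l.rotate j,
      (Multiset.coe_eq_coe.mpr (List.rotate_perm _ _)).trans hl, hcode⟩, ?_⟩
    simp only [Subtype.mk.injEq]
    rw [← hlen l hl, List.rotate_rotate, Nat.add_sub_cancel' hj.le, List.rotate_length]


namespace Multiset

variable {α : Type*}

instance finite_coe_eq (s : Multiset α) : Finite {l : List α // (l : Multiset α) = s} :=
  Set.Finite.to_subtype <| (List.finite_toSet s.toList.permutations).subset
    fun l (hl : (l : Multiset α) = s) => by simp [List.mem_permutations, ← coe_eq_coe, hl]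

theorem card_sum_replicate (T : Finset α) (a : α → ℕ) :
    card (∑ i ∈ T, replicate (a i) i) = ∑ i ∈ T, a i := by
  simp [card_sum]

theorem sum_sum_replicate {M : Type*} [AddCommMonoid M] (T : Finset M) (a : M → ℕ) :
    (∑ i ∈ T, replicate (a i) i).sum = ∑ i ∈ T, a i • i := by
  simp [sum_sum, sum_replicate]

variable [DecidableEq α]

def coeEqEquivSigma (s : Multiset α) (hs : s ≠ 0) :
    {l : List α // (l : Multiset α) = s} ≃
      Σ x : s.toFinset, {l : List α // (l : Multiset α) = s.erase x} where
  toFun l :=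
    have hl : l.1 ≠ [] := fun h => hs (by rw [← l.2, h, Multiset.coe_nil])
    have hs' : l.1.head hl ::ₘ (l.1.tail : Multiset α) = s := by
      rw [Multiset.cons_coe, List.cons_head_tail, l.2]
    ⟨⟨l.1.head hl, Multiset.mem_toFinset.mpr (by
      have := Multiset.mem_coe.mpr (List.head_mem hl); rwa [l.2] at this)⟩,
      l.1.tail, (erase_cons_head _ _).symm.trans (congrArg (erase · _) hs')⟩
  invFun p := ⟨p.1.1 :: p.2.1, by
    rw [← Multiset.cons_coe, p.2.2, Multiset.cons_erase (Multiset.mem_toFinset.mp p.1.2)]⟩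
  left_inv l := Subtype.ext (List.cons_head_tail _)
  right_inv _ := rfl

theorem prod_factorial_count_eq_count_mul {s : Multiset α} {T : Finset α} {x : α}
    (hxT : x ∈ T) (hxs : x ∈ s) :
    ∏ y ∈ T, (s.count y).factorial
      = s.count x * ∏ y ∈ T, ((s.erase x).count y).factorial := by
  have hrest : ∏ y ∈ T.erase x, ((s.erase x).count y).factorial
      = ∏ y ∈ T.erase x, (s.count y).factorial :=
    Finset.prod_congr rfl fun y hy => by rw [count_erase_of_ne (Finset.ne_of_mem_erase hy)]
  rw [← Finset.mul_prod_erase T _ hxT, ← Finset.mul_prod_erase T _ hxT, count_erase_self, hrest,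
    ← mul_assoc, Nat.mul_factorial_pred (count_pos.mpr hxs).ne']

theorem natCard_coe_eq_mul_prod_factorial_count (s : Multiset α) {T : Finset α}
    (hT : s.toFinset ⊆ T) :
    Nat.card {l : List α // (l : Multiset α) = s} * ∏ x ∈ T, (s.count x).factorial
      = (card s).factorial := by
  induction s using Multiset.strongInductionOn with
  | ih s ih =>
  rcases eq_or_ne s 0 with rfl | hs
  · simp [coe_eq_zero]
  have hcard : Nat.card {l : List α // (l : Multiset α) = s}
      = ∑ x ∈ s.toFinset, Nat.card {l : List α // (l : Multiset α) = s.erase x} := by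
    rw [Nat.card_congr (coeEqEquivSigma s hs), Nat.card_sigma]
    exact Finset.sum_coe_sort s.toFinset
      fun x => Nat.card {l : List α // (l : Multiset α) = s.erase x}
  have hterm : ∀ x ∈ s.toFinset,
      Nat.card {l : List α // (l : Multiset α) = s.erase x} * ∏ y ∈ T, (s.count y).factorial
        = s.count x * (card s - 1).factorial := by
    intro x hx
    have hxs := Multiset.mem_toFinset.mp hx
    rw [prod_factorial_count_eq_count_mul (hT hx) hxs, mul_left_comm,
      ih _ (erase_lt.mpr hxs) ((toFinset_subset.mpr (subset_of_le (erase_le x s))).trans hT),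
      card_erase_of_mem hxs, Nat.pred_eq_sub_one]
  rw [hcard, Finset.sum_mul, Finset.sum_congr rfl hterm, ← Finset.sum_mul,
    toFinset_sum_count_eq, Nat.mul_factorial_pred (card_pos.mpr hs).ne']

theorem count_sum_replicate (T : Finset α) (a : α → ℕ) (x : α) :
    (∑ i ∈ T, replicate (a i) i).count x = if x ∈ T then a x else 0 := by
  simp [count_sum', count_replicate]

theorem toFinset_sum_replicate_subset (T : Finset α) (a : α → ℕ) :
    (∑ i ∈ T, replicate (a i) i).toFinset ⊆ T := fun x hx => by
  by_contra hxT
  simp [← count_ne_zero, count_sum_replicate, hxT] at hx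

theorem eq_iff_card_eq_and_count_eq {u s : Multiset α} {T : Finset α} (hs : s.toFinset ⊆ T) :
    u = s ↔ card u = card s ∧ ∀ x ∈ T, u.count x = s.count x := by
  refine ⟨by rintro rfl; simp, fun ⟨hcard, hcount⟩ => ?_⟩
  refine (eq_of_le_of_card_le ?_ hcard.le).symm
  refine le_iff_count.mpr fun x => ?_
  by_cases hx : x ∈ T
  · exact (hcount x hx).ge
  · simp [count_eq_zero.mpr fun hxs => hx (hs (mem_toFinset.mpr hxs))]

end Multiset

namespace PlaneTree

@[induction_eliminator]
theorem induction {P : PlaneTree → Prop}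
    (node : ∀ ts : List PlaneTree, (∀ t ∈ ts, P t) → P (.node ts)) : ∀ t, P t
  | .node ts => node ts fun t _ => induction node t
decreasing_by have := List.sizeOf_lt_of_mem ‹t ∈ ts›; simp at this ⊢; omega

/-- The Łukasiewicz code: the degrees of the vertices in preorder. -/
def code : PlaneTree → List ℕ
  | .node ts => ts.length :: (ts.attach.map fun t => code t.1).flatten
decreasing_by have := List.sizeOf_lt_of_mem t.2; simp at this ⊢; omega

theorem code_node (ts : List PlaneTree) :
    (node ts).code = ts.length :: (ts.map code).flatten := by
  rw [code, List.attach_map_val]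

theorem size_node (ts : List PlaneTree) : (node ts).size = 1 + (ts.map size).sum := by
  rw [size, List.attach_map_val]

theorem degCount_node (i : ℕ) (ts : List PlaneTree) :
    (node ts).degCount i = (if ts.length = i then 1 else 0) + (ts.map (degCount i)).sum := by
  rw [degCount, List.attach_map_val]

theorem length_code (t : PlaneTree) : t.code.length = t.size := by
  induction t with
  | node ts ih =>
    rw [code_node, size_node, List.length_cons, List.length_flatten, List.map_map,
      List.map_congr_left (f := List.length ∘ code) ih]
    omega

theorem count_code (i : ℕ) (t : PlaneTree) : t.code.count i = t.degCount i := by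
  induction t with
  | node ts ih =>
    rw [code_node, degCount_node, List.count_cons, List.count_flatten, List.map_map,
      List.map_congr_left (f := List.count i ∘ code) ih]
    by_cases h : ts.length = i <;> simp [h, add_comm]

theorem isForestCode_code (t : PlaneTree) : IsForestCode 1 t.code := by
  induction t with
  | node ts ih =>
    rw [code_node, ← zero_add 1, isForestCode_succ_cons_iff, zero_add]
    simpa using isForestCode_flatten (ws := ts.map code) (by simpa using ih)

theorem code_injective : Function.Injective code := by
  intro t
  induction t with
  | node ts ih =>
    rintro ⟨ts'⟩ h
    rw [code_node, code_node, List.cons.injEq] at h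
    have hmap : ts.map code = ts'.map code :=
      eq_of_flatten_eq_of_isForestCode (by simp [isForestCode_code])
        (by simp [isForestCode_code]) h.2
    have hlen : ts.length = ts'.length := by simpa using congrArg List.length hmap
    refine congrArg node (List.ext_getElem hlen fun i hi hi' => ih _ (List.getElem_mem hi) ?_)
    simpa [hi, hi'] using congrArg (·[i]?) hmap

theorem exists_forest_of_isForestCode : ∀ {c : ℕ} {v : List ℕ}, IsForestCode c v →
    ∃ ts : List PlaneTree, ts.length = c ∧ (ts.map code).flatten = v
  | 0, _, h => ⟨[], rfl, (isForestCode_zero_iff.mp h).symm⟩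
  | c + 1, v, h => by
    obtain ⟨_ | ⟨d, x⟩, y, hv, hx, hy⟩ := h.exists_eq_append
    · exact absurd rfl hx.ne_nil
    rw [← zero_add 1, isForestCode_succ_cons_iff, zero_add] at hx
    have : x.length < v.length := by simp [hv]
    have : y.length < v.length := by simp [hv]
    obtain ⟨ts, hts, rfl⟩ := exists_forest_of_isForestCode hx
    obtain ⟨ts', hts', rfl⟩ := exists_forest_of_isForestCode hy
    exact ⟨node ts :: ts', by simp [hts'], by simp [hv, code_node, hts]⟩
termination_by _ v => v.length

theorem exists_code_eq {w : List ℕ} (hw : IsForestCode 1 w) : ∃ t : PlaneTree, t.code = w := by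
  obtain ⟨ts, hts, rfl⟩ := exists_forest_of_isForestCode hw
  obtain ⟨t, rfl⟩ := List.length_eq_one_iff.mp hts
  exact ⟨t, by simp⟩

theorem natCard_code_coe_eq (s : Multiset ℕ) :
    Nat.card {t : PlaneTree // (t.code : Multiset ℕ) = s}
      = Nat.card {w : List ℕ // (w : Multiset ℕ) = s ∧ IsForestCode 1 w} := by
  refine Nat.card_eq_of_bijective (fun t => ⟨t.1.code, t.2, isForestCode_code t.1⟩)
    ⟨fun t t' h => Subtype.ext (code_injective (congrArg Subtype.val h)), ?_⟩
  rintro ⟨w, hw, hwc⟩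
  obtain ⟨t, rfl⟩ := exists_code_eq hwc
  exact ⟨⟨t, hw⟩, rfl⟩

theorem coe_code_eq_iff {t : PlaneTree} {s : Multiset ℕ} {T : Finset ℕ}
    (hs : s.toFinset ⊆ T) :
    (t.code : Multiset ℕ) = s ↔
      t.size = Multiset.card s ∧ ∀ i ∈ T, t.degCount i = s.count i := by
  rw [Multiset.eq_iff_card_eq_and_count_eq hs, Multiset.coe_card, length_code]
  simp only [Multiset.coe_count, count_code]

end PlaneTree

theorem card_unlabeled_plane_trees_degree_partition (n m : ℕ) (hn : 1 ≤ n)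
    (a : ℕ → ℕ) (hpart : ∑ i ∈ Finset.Icc 1 m, i * a i = n - 1)
    (ha0 : a 0 = n - ∑ i ∈ Finset.Icc 1 m, a i)
    (hle : ∑ i ∈ Finset.Icc 1 m, a i ≤ n) :
    (Nat.card {t : PlaneTree // t.size = n ∧ ∀ i ≤ m, t.degCount i = a i} : ℚ) =
      (1 / n) * (n.factorial / ∏ i ∈ Finset.range (m + 1), (a i).factorial) := by
  set s : Multiset ℕ := ∑ i ∈ Finset.range (m + 1), Multiset.replicate (a i) i
  have hs : s.toFinset ⊆ Finset.range (m + 1) := Multiset.toFinset_sum_replicate_subset _ a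
  have hrange : Finset.range (m + 1) = insert 0 (Finset.Icc 1 m) := by ext; simp; omega
  have hcount : ∀ i ∈ Finset.range (m + 1), s.count i = a i := fun i hi => by
    simp [s, Multiset.count_sum_replicate, hi]
  have hcard : Multiset.card s = n := by
    rw [Multiset.card_sum_replicate, hrange, Finset.sum_insert (by simp)]
    omega
  have hsum : s.sum + 1 = Multiset.card s := by
    rw [hcard, Multiset.sum_sum_replicate, hrange, Finset.sum_insert (by simp)]
    simp only [smul_eq_mul, Nat.mul_comm (a _)]
    omega
  have htrees : {t : PlaneTree // t.size = n ∧ ∀ i ≤ m, t.degCount i = a i}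
      ≃ {t : PlaneTree // (t.code : Multiset ℕ) = s} := Equiv.subtypeEquivRight fun t => by
    rw [PlaneTree.coe_code_eq_iff hs, hcard]
    simp +contextual [hcount]
  have hperm := Multiset.natCard_coe_eq_mul_prod_factorial_count s hs
  rw [natCard_coe_eq_card_mul_natCard_isForestCode s hsum, ← PlaneTree.natCard_code_coe_eq,
    ← Nat.card_congr htrees, hcard, Finset.prod_congr rfl fun i hi => by rw [hcount i hi]]
    at hperm
  rw [← hperm]
  push_cast
  field_simp
end
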